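/- In the setting of the T⁽ᴶ⁾Q-formula (commutative ring R, U(v) = v − 2η, invertible Q, TQ-relation, fusion recursion, and T⁽ᴶ⁾(v) = Q(U⁻¹v)Q(Uᴶ⁻¹v)·Σ_{k=0}^{J−1} h̃(Uᵏ⁻¹v)^L Q(Uᵏ⁻¹v)⁻¹Q(Uᵏv)⁻¹ for all J ≥ 1), assume in addition the N-periodicity conditions Q(Uᴺv) = Q(v) and h̃(Uᴺv) = h̃(v) for all v, for a fixed positive integer N. Then the boundary fusion relation T⁽ᴺ⁺¹⁾(v) = T⁽ᴺ⁻¹⁾(Uv) + 2·h̃(U⁻¹v)^L holds for all v. -/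

import Mathlib

/-!
By the `T⁽ᴶ⁾Q`-formula, `T⁽ᴺ⁺¹⁾(v)` and `T⁽ᴺ⁻¹⁾(Uv)` carry the same prefactor `Q(U⁻¹v) Q(v)` once
`Q` is `N`-periodic, and the sum for `T⁽ᴺ⁻¹⁾(Uv)` is the sum for `T⁽ᴺ⁺¹⁾(v)` with its first and last
summands removed. By periodicity these two summands coincide, and each contributes `h̃(U⁻¹v)^L`
after multiplication by the prefactor.
-/

open Finset

theorem sum_range_succ_eq_sum_shift_add_two_nsmul {M : Type*} [AddCommMonoid M] {g : ℕ → M}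
    {N : ℕ} (hN : 0 < N) (hg : g N = g 0) :
    ∑ k ∈ range (N + 1), g k = ∑ k ∈ range (N - 1), g (k + 1) + 2 • g 0 := by
  obtain ⟨M, rfl⟩ : ∃ M, N = M + 1 := ⟨N - 1, by omega⟩
  rw [sum_range_succ, sum_range_succ', hg, two_nsmul, Nat.add_sub_cancel]
  abel

section FusionTerm

variable {R : Type*} [CommRing R] (η : ℂ) (L : ℕ) (htil : ℂ → R) (Q : ℂ → Rˣ)

/-- The summand `h̃(Uᵏ⁻¹v)^L Q(Uᵏ⁻¹v)⁻¹ Q(Uᵏv)⁻¹` of the `T⁽ᴶ⁾Q`-formula, with `U v = v - 2η`. -/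
def fusionTerm (v : ℂ) (k : ℕ) : R :=
  htil (v - 2*((k : ℂ) - 1)*η) ^ L *
    ((Q (v - 2*((k : ℂ) - 1)*η))⁻¹ : Rˣ) * ((Q (v - 2*(k : ℂ)*η))⁻¹ : Rˣ)

theorem fusionTerm_sub_two_mul (v : ℂ) (k : ℕ) :
    fusionTerm η L htil Q (v - 2*η) k = fusionTerm η L htil Q v (k + 1) := by
  unfold fusionTerm
  push_cast
  ring_nf

theorem fusionTerm_zero (v : ℂ) :
    fusionTerm η L htil Q v 0 = htil (v + 2*η) ^ L * ((Q (v + 2*η))⁻¹ : Rˣ) * ((Q v)⁻¹ : Rˣ) := by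
  unfold fusionTerm
  push_cast
  ring_nf

theorem mul_fusionTerm_zero (v : ℂ) :
    (Q (v + 2*η) : R) * Q v * fusionTerm η L htil Q v 0 = htil (v + 2*η) ^ L := by
  rw [fusionTerm_zero]
  linear_combination (htil (v + 2*η) ^ L * (Q v : R) * ((Q v)⁻¹ : Rˣ)) * Units.mul_inv (Q (v + 2*η))
    + htil (v + 2*η) ^ L * Units.mul_inv (Q v)

theorem fusionTerm_period {N : ℕ} (hQper : ∀ v : ℂ, Q (v - 2*(N : ℂ)*η) = Q v)
    (hhper : ∀ v : ℂ, htil (v - 2*(N : ℂ)*η) = htil v) (v : ℂ) :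
    fusionTerm η L htil Q v N = fusionTerm η L htil Q v 0 := by
  have hshift : v - 2*((N : ℂ) - 1)*η = v + 2*η - 2*(N : ℂ)*η := by ring
  rw [fusionTerm, hshift, hQper, hhper, hQper, fusionTerm_zero]

theorem fusion_formula_pred_sub_two_mul {N : ℕ} (hN : 0 < N) (Tf : ℕ → ℂ → R)
    (hT0 : ∀ v : ℂ, Tf 0 v = 0)
    (hfus : ∀ J : ℕ, 1 ≤ J → ∀ v : ℂ, Tf J v =
      (Q (v + 2*η) : R) * Q (v - 2*((J : ℂ) - 1)*η) * ∑ k ∈ range J, fusionTerm η L htil Q v k)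
    (hQper : ∀ v : ℂ, Q (v - 2*(N : ℂ)*η) = Q v) (v : ℂ) :
    Tf (N - 1) (v - 2*η) =
      (Q (v + 2*η) : R) * Q v * ∑ k ∈ range (N - 1), fusionTerm η L htil Q v (k + 1) := by
  obtain rfl | hN1 := (Nat.succ_le_of_lt hN).eq_or_lt
  · simp [hT0]
  have hshift : v - 2*η - 2*(((N - 1 : ℕ) : ℂ) - 1)*η = v + 2*η - 2*(N : ℂ)*η := by
    rw [Nat.cast_sub hN1.le]
    ring
  rw [hfus (N - 1) (by omega), hshift, hQper, sub_add_cancel, mul_comm (Q v : R)]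
  simp only [fusionTerm_sub_two_mul]

end FusionTerm

theorem eightVertex_boundary_fusion {R : Type*} [CommRing R] (η : ℂ) (L N : ℕ)
    (hN : 0 < N)
    (Q : ℂ → Rˣ) (htil : ℂ → R) (Tf : ℕ → ℂ → R)
    (hT0 : ∀ v : ℂ, Tf 0 v = 0)
    (hfus : ∀ J : ℕ, 1 ≤ J → ∀ v : ℂ,
      Tf J v = (Q (v + 2*η) : R) * (Q (v - 2*((J : ℂ) - 1)*η) : R) *
        ∑ k ∈ range J, htil (v - 2*((k : ℂ) - 1)*η) ^ L *
          ((Q (v - 2*((k : ℂ) - 1)*η))⁻¹ : Rˣ) * ((Q (v - 2*(k : ℂ)*η))⁻¹ : Rˣ))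
    (hQper : ∀ v : ℂ, Q (v - 2*(N : ℂ)*η) = Q v)
    (hhper : ∀ v : ℂ, htil (v - 2*(N : ℂ)*η) = htil v) :
    ∀ v : ℂ, Tf (N + 1) v = Tf (N - 1) (v - 2*η) + 2 * htil (v + 2*η) ^ L := by
  intro v
  have hlast : v - 2*(((N + 1 : ℕ) : ℂ) - 1)*η = v - 2*(N : ℂ)*η := by push_cast; ring
  have hsucc : Tf (N + 1) v =
      (Q (v + 2*η) : R) * Q v * ∑ k ∈ range (N + 1), fusionTerm η L htil Q v k := by
    rw [hfus (N + 1) (by omega), hlast, hQper]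
    rfl
  rw [hsucc, fusion_formula_pred_sub_two_mul η L htil Q hN Tf hT0 hfus hQper,
    sum_range_succ_eq_sum_shift_add_two_nsmul hN (fusionTerm_period η L htil Q hQper hhper v),
    ← mul_fusionTerm_zero η L htil Q v, nsmul_eq_mul, Nat.cast_ofNat]
  ring
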